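/- arXiv:1701.06695 — 3 statements merged into one kernel-verified Lean document; each statement's English description precedes it below -/
import Mathlib

section
/- Let A be a commutative ℚ-algebra and M a free A-module with basis (b_t)_{t∈ℕ}. For t ∈ ℕ let J_t denote the two-sided ideal of Λ_A(M) generated by the set {ι(b_s) : s < t}, and let J denote the two-sided ideal generated by {ι(b_s) : s ∈ ℕ}. Let D : Λ_A(M) → Λ_A(M) be an A-linear map such that: (i) D(1) = 0; (ii) D ∘ D = 0; (iii) D(ι(w) * y) = D(ι(w)) * y − ι(w) * D(y) for all w ∈ M and all y ∈ Λ_A(M); (iv) for every t ∈ ℕ there exists P_t ∈ A with D(ι(b_t)) − algebraMap(P_t) ∈ J_t; and (v) for every t ∈ ℕ there exist an index k > t+1 and Q ∈ A with D(ι(b_k)) − ι(b_t) * ι(b_{t+1}) − algebraMap(Q) ∈ J_t. Then D(ι(b_t)) ∈ J_t for every t ∈ ℕ, and consequently D(J) ⊆ J. -/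
open ExteriorAlgebra

section Aux

variable {A : Type*} [CommRing A] {M : Type*} [AddCommGroup M] [Module A M]

/-- The grade involution on the exterior algebra. -/
noncomputable def giAux : ExteriorAlgebra A M →ₐ[A] ExteriorAlgebra A M :=
  ExteriorAlgebra.lift A ⟨-(ι A : M →ₗ[A] ExteriorAlgebra A M), fun m => by
    simp [neg_mul_neg, ι_sq_zero]⟩

@[simp] lemma giAux_ι (m : M) : giAux (ι A m) = - ι A m := by
  simpa [giAux] using ExteriorAlgebra.lift_ι_apply
    (-(ι A : M →ₗ[A] ExteriorAlgebra A M)) (fun m => by simp [neg_mul_neg, ι_sq_zero]) m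

lemma ι_mul_eq_gi (w : M) (x : ExteriorAlgebra A M) :
    ι A w * x = giAux x * ι A w := by
  induction x using ExteriorAlgebra.induction with
  | algebraMap r => simp [Algebra.commutes]
  | ι m =>
      rw [giAux_ι, neg_mul]
      have := ι_add_mul_swap (R := A) w m
      linear_combination (norm := noncomm_ring) this
  | mul a b ha hb => rw [← mul_assoc, ha, mul_assoc, hb, map_mul, mul_assoc]
  | add a b ha hb => rw [mul_add, ha, hb, map_add, add_mul]

/-- Generalized (graded) Leibniz rule. -/
lemma leibniz_aux (D : ExteriorAlgebra A M →ₗ[A] ExteriorAlgebra A M)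
    (hD1 : D 1 = 0)
    (hLeib : ∀ (w : M) (y : ExteriorAlgebra A M),
      D (ι A w * y) = D (ι A w) * y - ι A w * D y)
    (x y : ExteriorAlgebra A M) :
    D (x * y) = D x * y + giAux x * D y := by
  induction x using ExteriorAlgebra.induction generalizing y with
  | algebraMap r =>
      simp [Algebra.algebraMap_eq_smul_one, map_smul, hD1, smul_mul_assoc]
  | ι m => rw [hLeib, giAux_ι, neg_mul, sub_eq_add_neg]
  | mul a c ha hc =>
      rw [mul_assoc, ha (c * y), hc y, ha c, map_mul]
      noncomm_ring
  | add a c ha hc =>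
      simp only [add_mul, map_add, ha, hc]
      abel


/-- If a two-sided ideal contains `D g` and `giAux g` for each generator `g` of a spanning set,
then it is `D`-stable on the span. -/
lemma stab_aux (D : ExteriorAlgebra A M →ₗ[A] ExteriorAlgebra A M)
    (hD1 : D 1 = 0)
    (hLeib : ∀ (w : M) (y : ExteriorAlgebra A M),
      D (ι A w * y) = D (ι A w) * y - ι A w * D y)
    (I : TwoSidedIdeal (ExteriorAlgebra A M)) (s : Set (ExteriorAlgebra A M))
    (hsub : s ⊆ I) (hgen : ∀ g ∈ s, D g ∈ I ∧ giAux g ∈ I)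
    (x : ExteriorAlgebra A M) (hx : x ∈ TwoSidedIdeal.span s) : D x ∈ I := by
  set K : TwoSidedIdeal (ExteriorAlgebra A M) :=
    TwoSidedIdeal.mk' {x | x ∈ I ∧ D x ∈ I ∧ giAux x ∈ I}
      ⟨I.zero_mem, by simp [I.zero_mem]⟩
      (fun {x y} hx hy => ⟨I.add_mem hx.1 hy.1, by
        simp only [map_add]
        exact ⟨I.add_mem hx.2.1 hy.2.1, I.add_mem hx.2.2 hy.2.2⟩⟩)
      (fun {x} hx => ⟨I.neg_mem hx.1, by
        simp only [map_neg]
        exact ⟨I.neg_mem hx.2.1, I.neg_mem hx.2.2⟩⟩)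
      (fun {x y} hy => ⟨I.mul_mem_left _ _ hy.1, by
        rw [leibniz_aux D hD1 hLeib, map_mul]
        exact ⟨I.add_mem (I.mul_mem_left _ _ hy.1) (I.mul_mem_left _ _ hy.2.1),
          I.mul_mem_left _ _ hy.2.2⟩⟩)
      (fun {x y} hx => ⟨I.mul_mem_right _ _ hx.1, by
        rw [leibniz_aux D hD1 hLeib, map_mul]
        exact ⟨I.add_mem (I.mul_mem_right _ _ hx.2.1) (I.mul_mem_right _ _ hx.2.2),
          I.mul_mem_right _ _ hx.2.2⟩⟩) with hK
  have hxK : x ∈ K := by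
    rw [TwoSidedIdeal.mem_span_iff] at hx
    exact hx K (fun g hg => (TwoSidedIdeal.mem_mk' _ _ _ _ _ _ g).2
      ⟨hsub hg, (hgen g hg).1, (hgen g hg).2⟩)
  exact ((TwoSidedIdeal.mem_mk' _ _ _ _ _ _ x).1 hxK).2.1

/-- Left multiplication by `ι w` sends the span of `s` into `I` provided it sends `s` into `I`. -/
lemma mul_stab_aux (w : M) (I : TwoSidedIdeal (ExteriorAlgebra A M))
    (s : Set (ExteriorAlgebra A M)) (hgen : ∀ g ∈ s, ι A w * g ∈ I)
    (x : ExteriorAlgebra A M) (hx : x ∈ TwoSidedIdeal.span s) : ι A w * x ∈ I := by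
  set K : TwoSidedIdeal (ExteriorAlgebra A M) :=
    TwoSidedIdeal.mk' {x | ι A w * x ∈ I}
      (by simp [Set.mem_setOf_eq, I.zero_mem])
      (fun {x y} hx hy => by simpa [mul_add] using I.add_mem hx hy)
      (fun {x} hx => by simpa [mul_neg] using I.neg_mem hx)
      (fun {x y} hy => by
        show ι A w * (x * y) ∈ I
        rw [← mul_assoc, ι_mul_eq_gi w x, mul_assoc]
        exact I.mul_mem_left _ _ hy)
      (fun {x y} hx => by
        show ι A w * (x * y) ∈ I
        rw [← mul_assoc]
        exact I.mul_mem_right _ _ hx) with hK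
  have hxK : x ∈ K := by
    rw [TwoSidedIdeal.mem_span_iff] at hx
    exact hx K (fun g hg => (TwoSidedIdeal.mem_mk' _ _ _ _ _ _ g).2 (hgen g hg))
  exact (TwoSidedIdeal.mem_mk' _ _ _ _ _ _ x).1 hxK

end Aux
/-- Algebraic form of Proposition 3.2 (ideal-stability form): for a differential `D` on
`Λ_A(M)`, with `M` free on `(b t)`, whose values on generators are, modulo the ideal on
the earlier generators, scalars (iv), and such that each product `ι(b t) * ι(b (t+1))` is,
modulo that ideal and scalars, a value `D (ι (b k))` (v), every `D (ι (b t))` lies in the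
ideal generated by the earlier generators; consequently the ideal generated by all the
`ι (b s)` is `D`-stable. -/
theorem stmt3 {A : Type*} [CommRing A] [Algebra ℚ A]
    {M : Type*} [AddCommGroup M] [Module A M]
    (b : Module.Basis ℕ A M)
    (J : ℕ → TwoSidedIdeal (ExteriorAlgebra A M))
    (hJ : ∀ t, J t =
      TwoSidedIdeal.span ((ι A : M →ₗ[A] ExteriorAlgebra A M) '' (b '' Set.Iio t)))
    (Jtot : TwoSidedIdeal (ExteriorAlgebra A M))
    (hJtot : Jtot =
      TwoSidedIdeal.span (Set.range fun s : ℕ => (ι A (b s) : ExteriorAlgebra A M)))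
    (D : ExteriorAlgebra A M →ₗ[A] ExteriorAlgebra A M)
    (hD1 : D 1 = 0)
    (hD2 : ∀ x, D (D x) = 0)
    (hLeib : ∀ (w : M) (y : ExteriorAlgebra A M),
      D (ι A w * y) = D (ι A w) * y - ι A w * D y)
    (hscalar : ∀ t : ℕ, ∃ P : A,
      D (ι A (b t)) - algebraMap A (ExteriorAlgebra A M) P ∈ J t)
    (hquad : ∀ t : ℕ, ∃ k : ℕ, t + 1 < k ∧ ∃ Q : A,
      D (ι A (b k)) - ι A (b t) * ι A (b (t + 1))
        - algebraMap A (ExteriorAlgebra A M) Q ∈ J t) :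
    (∀ t : ℕ, D (ι A (b t)) ∈ J t) ∧ (∀ x ∈ Jtot, D x ∈ Jtot) := by
  have hDscal : ∀ r : A, D (algebraMap A (ExteriorAlgebra A M) r) = 0 := fun r => by
    rw [Algebra.algebraMap_eq_smul_one, map_smul, hD1, smul_zero]
  -- generators of J t
  have hgenJ : ∀ t s, s < t → ι A (b s) ∈ J t := fun t s hs => by
    rw [hJ t]
    exact TwoSidedIdeal.subset_span ⟨b s, ⟨s, hs, rfl⟩, rfl⟩
  have hmono : ∀ s t : ℕ, s ≤ t → J s ≤ J t := fun s t hst => by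
    rw [hJ s, hJ t]
    exact TwoSidedIdeal.span_mono
      (Set.image_mono (Set.image_mono (fun u hu => lt_of_lt_of_le hu hst)))
  -- main strong induction
  have key : ∀ t : ℕ, D (ι A (b t)) ∈ J t := by
    intro t
    induction t using Nat.strong_induction_on with
    | _ t IH =>
    -- J t is D-stable
    have hDJ : ∀ x ∈ J t, D x ∈ J t := by
      intro x hx
      refine stab_aux D hD1 hLeib (J t) _ ?_ ?_ x (by rwa [hJ t] at hx)
      · intro g hg
        obtain ⟨m, ⟨s, hs, rfl⟩, rfl⟩ := hg
        exact hgenJ t s hs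
      · rintro g ⟨m, ⟨s, hs, rfl⟩, rfl⟩
        refine ⟨hmono s t (le_of_lt hs) (IH s hs), ?_⟩
        rw [giAux_ι]
        exact (J t).neg_mem (hgenJ t s hs)
    obtain ⟨P, hP⟩ := hscalar t
    obtain ⟨P', hP'⟩ := hscalar (t + 1)
    obtain ⟨k, hk, Q, hQ⟩ := hquad t
    -- D (ι b t * ι b (t+1)) ∈ J t
    have h1 : D (ι A (b t) * ι A (b (t + 1))) ∈ J t := by
      have h2 := hDJ _ hQ
      have h3 : D (D (ι A (b k)) - ι A (b t) * ι A (b (t + 1))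
          - algebraMap A (ExteriorAlgebra A M) Q) = - D (ι A (b t) * ι A (b (t + 1))) := by
        rw [map_sub, map_sub, hD2, hDscal]
        abel
      rw [h3] at h2
      simpa using (J t).neg_mem h2
    -- ι b t * (D (ι b (t+1)) - algebraMap P') ∈ J t
    have h4 : ι A (b t) * (D (ι A (b (t + 1))) - algebraMap A (ExteriorAlgebra A M) P') ∈ J t := by
      refine mul_stab_aux (b t) (J t) _ ?_ _ (by rwa [hJ (t + 1)] at hP')
      rintro g ⟨m, ⟨s, hs, rfl⟩, rfl⟩
      rcases lt_or_eq_of_le (Nat.lt_succ_iff.mp hs) with h | h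
      · exact (J t).mul_mem_left _ _ (hgenJ t s h)
      · subst h; rw [ι_sq_zero]; exact TwoSidedIdeal.zero_mem _
    -- the scalar relation
    have hz : algebraMap A (ExteriorAlgebra A M) P * ι A (b (t + 1))
        - ι A (b t) * algebraMap A (ExteriorAlgebra A M) P' ∈ J t := by
      have e : algebraMap A (ExteriorAlgebra A M) P * ι A (b (t + 1))
          - ι A (b t) * algebraMap A (ExteriorAlgebra A M) P'
          = D (ι A (b t) * ι A (b (t + 1)))
            - (D (ι A (b t)) - algebraMap A (ExteriorAlgebra A M) P) * ι A (b (t + 1))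
            + ι A (b t) * (D (ι A (b (t + 1))) - algebraMap A (ExteriorAlgebra A M) P') := by
        rw [hLeib]
        noncomm_ring
      rw [e]
      exact (J t).add_mem ((J t).sub_mem h1 ((J t).mul_mem_right _ _ hP)) h4
    -- kill J t by an algebra map fixing ι b s for s ≥ t
    set p : M →ₗ[A] M := Module.Basis.constr b A (fun s => if s < t then (0 : M) else b s) with hp
    have hp2 : ∀ m : M, (ι A ∘ₗ p) m * (ι A ∘ₗ p) m = 0 := fun m => ι_sq_zero _
    set φ : ExteriorAlgebra A M →ₐ[A] ExteriorAlgebra A M :=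
      ExteriorAlgebra.lift A ⟨ι A ∘ₗ p, hp2⟩ with hφ
    have hφι : ∀ s : ℕ, φ (ι A (b s)) = if s < t then 0 else ι A (b s) := fun s => by
      rw [hφ, ExteriorAlgebra.lift_ι_apply]
      simp only [LinearMap.comp_apply, hp, Module.Basis.constr_basis]
      split <;> simp
    have hker : ∀ x ∈ J t, φ x = 0 := by
      intro x hx
      rw [hJ t, TwoSidedIdeal.mem_span_iff] at hx
      have := hx (TwoSidedIdeal.ker φ) ?_
      · exact (TwoSidedIdeal.mem_ker φ).mp this
      · rintro g ⟨m, ⟨s, hs, rfl⟩, rfl⟩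
        rw [SetLike.mem_coe, TwoSidedIdeal.mem_ker, hφι s, if_pos (show s < t from hs)]
    have hz0 : algebraMap A (ExteriorAlgebra A M) P * ι A (b (t + 1))
        - ι A (b t) * algebraMap A (ExteriorAlgebra A M) P' = 0 := by
      have := hker _ hz
      rwa [map_sub, map_mul, map_mul, AlgHom.commutes, AlgHom.commutes,
        hφι (t + 1), hφι t, if_neg (by omega), if_neg (by omega)] at this
    -- deduce P = 0
    have hP0 : P = 0 := by
      have e0 := sub_eq_zero.mp hz0
      rw [← Algebra.commutes P' (ι A (b t)), ← Algebra.smul_def, ← Algebra.smul_def,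
        ← (ι A : M →ₗ[A] ExteriorAlgebra A M).map_smul P (b (t + 1)),
        ← (ι A : M →ₗ[A] ExteriorAlgebra A M).map_smul P' (b t)] at e0
      have e1 : P • b (t + 1) = P' • b t := (ExteriorAlgebra.ι_inj A _ _).mp e0
      have e2 := congrArg (fun m => b.repr m (t + 1)) e1
      simpa [Module.Basis.repr_self, Finsupp.single_apply] using e2
    rw [hP0, map_zero, sub_zero] at hP
    exact hP
  refine ⟨key, ?_⟩
  intro x hx
  have hsub : Set.range (fun s : ℕ => (ι A (b s) : ExteriorAlgebra A M)) ⊆ Jtot := by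
    rw [hJtot]; exact TwoSidedIdeal.subset_span
  have hJle : ∀ s : ℕ, J s ≤ Jtot := fun s => by
    rw [hJ s, hJtot]
    refine TwoSidedIdeal.span_mono ?_
    rintro g ⟨m, ⟨u, _, rfl⟩, rfl⟩
    exact ⟨u, rfl⟩
  refine stab_aux D hD1 hLeib Jtot _ hsub ?_ x (by rwa [hJtot] at hx)
  rintro g ⟨s, rfl⟩
  exact ⟨hJle s (key s), by rw [giAux_ι]; exact Jtot.neg_mem (hsub ⟨s, rfl⟩)⟩
end

section
/- Let A be a commutative ℚ-algebra and M a free A-module with basis (b_t)_{t∈ℕ}. For t ∈ ℕ let J_t denote the two-sided ideal of Λ_A(M) generated by the set {ι(b_s) : s < t}. Let D : Λ_A(M) → Λ_A(M) be an A-linear map such that: (i) D(1) = 0; (ii) D ∘ D = 0; (iii) D(ι(w) * y) = D(ι(w)) * y − ι(w) * D(y) for all w ∈ M and all y ∈ Λ_A(M); (iv) for every t ∈ ℕ there exists P_t ∈ A with D(ι(b_t)) − algebraMap(P_t) ∈ J_t; and (v) for every t ∈ ℕ there exist an index k > t+1 and Q ∈ A with D(ι(b_k)) − ι(b_t) * ι(b_{t+1})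 − algebraMap(Q) ∈ J_t. Then the augmentation π : Λ_A(M) → A satisfies π ∘ D = 0; that is, π is an A-algebra left inverse of algebraMap : A → Λ_A(M) intertwining the differential D with the zero differential on A. -/
open ExteriorAlgebra

private lemma kill_span {R S : Type*} [Ring R] [Ring S] (f : R →+* S) {s : Set R}
    (h : ∀ x ∈ s, f x = 0) : ∀ x ∈ TwoSidedIdeal.span s, f x = 0 := by
  intro x hx
  refine (TwoSidedIdeal.mem_ker f).mp (TwoSidedIdeal.mem_span_iff.mp hx (TwoSidedIdeal.ker f) ?_)
  intro y hy
  exact (TwoSidedIdeal.mem_ker f).mpr (h y hy)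

/-- Algebraic form of Proposition 3.2 (section form): under the hypotheses of the
ideal-stability form, the augmentation `π = algebraMapInv : Λ_A(M) → A` satisfies
`π ∘ D = 0`; that is, `π` is an `A`-algebra left inverse of `algebraMap` intertwining
the differential `D` with the zero differential on `A`. -/
theorem stmt4 {A : Type*} [CommRing A] [Algebra ℚ A]
    {M : Type*} [AddCommGroup M] [Module A M]
    (b : Module.Basis ℕ A M)
    (J : ℕ → TwoSidedIdeal (ExteriorAlgebra A M))
    (hJ : ∀ t, J t =
      TwoSidedIdeal.span ((ι A : M →ₗ[A] ExteriorAlgebra A M) '' (b '' Set.Iio t)))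
    (D : ExteriorAlgebra A M →ₗ[A] ExteriorAlgebra A M)
    (hD1 : D 1 = 0)
    (hD2 : ∀ x, D (D x) = 0)
    (hLeib : ∀ (w : M) (y : ExteriorAlgebra A M),
      D (ι A w * y) = D (ι A w) * y - ι A w * D y)
    (hscalar : ∀ t : ℕ, ∃ P : A,
      D (ι A (b t)) - algebraMap A (ExteriorAlgebra A M) P ∈ J t)
    (hquad : ∀ t : ℕ, ∃ k : ℕ, t + 1 < k ∧ ∃ Q : A,
      D (ι A (b k)) - ι A (b t) * ι A (b (t + 1))
        - algebraMap A (ExteriorAlgebra A M) Q ∈ J t) :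
    (∀ x : ExteriorAlgebra A M, algebraMapInv (D x) = 0) ∧
      (∀ a : A, algebraMapInv (algebraMap A (ExteriorAlgebra A M) a) = a) := by
  set π : ExteriorAlgebra A M →ₐ[A] A := algebraMapInv with hπdef
  -- D kills scalars
  have hDalg : ∀ r : A, D (algebraMap A (ExteriorAlgebra A M) r) = 0 := by
    intro r
    rw [Algebra.algebraMap_eq_smul_one, map_smul, hD1, smul_zero]
  -- the grade involution
  have hσsq : ∀ m : M, (-(ι A : M →ₗ[A] ExteriorAlgebra A M)) m
      * (-(ι A : M →ₗ[A] ExteriorAlgebra A M)) m = 0 := by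
    intro m
    simp [ι_sq_zero]
  set σ : ExteriorAlgebra A M →ₐ[A] ExteriorAlgebra A M :=
    ExteriorAlgebra.lift A ⟨-(ι A : M →ₗ[A] ExteriorAlgebra A M), hσsq⟩ with hσdef
  have hσι : ∀ w : M, σ (ι A w) = -(ι A w) := by
    intro w
    rw [hσdef, lift_ι_apply]
    rfl
  -- full signed Leibniz rule
  have leib : ∀ u v : ExteriorAlgebra A M, D (u * v) = D u * v + σ u * D v := by
    intro u
    induction u using ExteriorAlgebra.induction with
    | algebraMap r =>
      intro v
      rw [hDalg, AlgHom.commutes, zero_mul, zero_add, ← Algebra.smul_def, map_smul,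
        Algebra.smul_def]
    | ι w =>
      intro v
      rw [hLeib, hσι, neg_mul, sub_eq_add_neg]
    | mul u₁ u₂ h₁ h₂ =>
      intro v
      rw [mul_assoc, h₁, h₂, h₁ u₂, map_mul]
      noncomm_ring
    | add u₁ u₂ h₁ h₂ =>
      intro v
      rw [add_mul, map_add, map_add, map_add, h₁, h₂, add_mul, add_mul]
      abel
  -- π kills ι
  have hπι : ∀ w : M, π (ι A w) = 0 := by
    intro w
    rw [hπdef]
    rw [show (algebraMapInv : ExteriorAlgebra A M →ₐ[A] A)
      = ExteriorAlgebra.lift A ⟨(0 : M →ₗ[A] A), fun _ => by simp⟩ from rfl, lift_ι_apply]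
    rfl
  have hπalg : ∀ r : A, π (algebraMap A (ExteriorAlgebra A M) r) = r := fun r =>
    ExteriorAlgebra.algebraMap_leftInverse M r
  -- generators lie in the ideals
  have hgenJ : ∀ s t : ℕ, s < t → ι A (b s) ∈ J t := by
    intro s t h
    rw [hJ]
    exact TwoSidedIdeal.subset_span ⟨b s, ⟨s, h, rfl⟩, rfl⟩
  have Jmono : ∀ {s t : ℕ}, s ≤ t → J s ≤ J t := by
    intro s t h
    rw [hJ, hJ]
    exact TwoSidedIdeal.span_mono (Set.image_mono (Set.image_mono
      (fun x hx => lt_of_lt_of_le hx h)))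
  -- π kills the ideals
  have hkillπ : ∀ t : ℕ, ∀ x ∈ J t, π x = 0 := by
    intro t x hx
    rw [hJ] at hx
    refine kill_span π.toRingHom ?_ x hx
    rintro _ ⟨_, ⟨s, hs, rfl⟩, rfl⟩
    exact hπι _
  -- stability of ideals under D
  have hstab : ∀ t t' : ℕ, t ≤ t' → (∀ s, s < t → D (ι A (b s)) ∈ J t') →
      ∀ x ∈ J t, D x ∈ J t' := by
    intro t t' htt hgen x hx
    set C : Set (ExteriorAlgebra A M) := {x | x ∈ J t' ∧ D x ∈ J t' ∧ σ x ∈ J t'} with hC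
    have hmem : ∀ y : ExteriorAlgebra A M, y ∈ C ↔ (y ∈ J t' ∧ D y ∈ J t' ∧ σ y ∈ J t') := by
      intro y; rfl
    have hz : (0 : ExteriorAlgebra A M) ∈ C := by
      rw [hmem]
      refine ⟨(J t').zero_mem, ?_, ?_⟩
      · rw [map_zero]; exact (J t').zero_mem
      · rw [map_zero]; exact (J t').zero_mem
    have hadd : ∀ {x y : ExteriorAlgebra A M}, x ∈ C → y ∈ C → x + y ∈ C := by
      intro x y hx hy
      rw [hmem] at hx hy ⊢
      refine ⟨(J t').add_mem hx.1 hy.1, ?_, ?_⟩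
      · rw [map_add]; exact (J t').add_mem hx.2.1 hy.2.1
      · rw [map_add]; exact (J t').add_mem hx.2.2 hy.2.2
    have hneg : ∀ {x : ExteriorAlgebra A M}, x ∈ C → -x ∈ C := by
      intro x hx
      rw [hmem] at hx ⊢
      refine ⟨(J t').neg_mem hx.1, ?_, ?_⟩
      · rw [map_neg]; exact (J t').neg_mem hx.2.1
      · rw [map_neg]; exact (J t').neg_mem hx.2.2
    have hml : ∀ {x y : ExteriorAlgebra A M}, y ∈ C → x * y ∈ C := by
      intro x y hy
      rw [hmem] at hy ⊢
      refine ⟨(J t').mul_mem_left _ _ hy.1, ?_, ?_⟩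
      · rw [leib]
        exact (J t').add_mem ((J t').mul_mem_left _ _ hy.1)
          ((J t').mul_mem_left _ _ hy.2.1)
      · rw [map_mul]; exact (J t').mul_mem_left _ _ hy.2.2
    have hmr : ∀ {x y : ExteriorAlgebra A M}, x ∈ C → x * y ∈ C := by
      intro x y hx
      rw [hmem] at hx ⊢
      refine ⟨(J t').mul_mem_right _ _ hx.1, ?_, ?_⟩
      · rw [leib]
        exact (J t').add_mem ((J t').mul_mem_right _ _ hx.2.1)
          ((J t').mul_mem_right _ _ hx.2.2)
      · rw [map_mul]; exact (J t').mul_mem_right _ _ hx.2.2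
    rw [hJ] at hx
    have hxI := TwoSidedIdeal.mem_span_iff.mp hx
      (TwoSidedIdeal.mk' C hz hadd hneg hml hmr) ?_
    · rw [TwoSidedIdeal.mem_mk'] at hxI
      exact ((hmem x).mp hxI).2.1
    · rintro _ ⟨_, ⟨s, hs, rfl⟩, rfl⟩
      rw [SetLike.mem_coe, TwoSidedIdeal.mem_mk']
      refine (hmem _).mpr ⟨hgenJ s t' (lt_of_lt_of_le hs htt), hgen s hs, ?_⟩
      rw [hσι]
      exact (J t').neg_mem (hgenJ s t' (lt_of_lt_of_le hs htt))
  -- the key computation: π (D (ι (b t))) = 0 by strong induction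
  have hP : ∀ t : ℕ, π (D (ι A (b t))) = 0 := by
    intro t
    induction t using Nat.strong_induction_on with
    | _ t IH =>
      -- for s < t, D (ι (b s)) ∈ J s
      have hDs : ∀ s, s < t → D (ι A (b s)) ∈ J s := by
        intro s hs
        obtain ⟨P, hPm⟩ := hscalar s
        have h0 : π (D (ι A (b s)) - algebraMap A (ExteriorAlgebra A M) P) = 0 :=
          hkillπ s _ hPm
        rw [map_sub, IH s hs, hπalg, zero_sub, neg_eq_zero] at h0
        rw [h0, map_zero, sub_zero] at hPm
        exact hPm
      obtain ⟨P, hPm⟩ := hscalar t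
      have hπDbt : π (D (ι A (b t))) = P := by
        have h0 := hkillπ t _ hPm
        rw [map_sub, hπalg, sub_eq_zero] at h0
        exact h0
      rw [hπDbt]
      -- the quadratic relation
      obtain ⟨k, hk, Q, hq⟩ := hquad t
      -- detecting homomorphism
      have hf : ∀ m : M, ((TrivSqZeroExt.inrHom A A) ∘ₗ (b.coord (t+1))) m
          * ((TrivSqZeroExt.inrHom A A) ∘ₗ (b.coord (t+1))) m = 0 := fun m =>
        TrivSqZeroExt.inr_mul_inr A _ _
      set φ : ExteriorAlgebra A M →ₐ[A] TrivSqZeroExt A A :=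
        ExteriorAlgebra.lift A ⟨(TrivSqZeroExt.inrHom A A) ∘ₗ (b.coord (t+1)), hf⟩ with hφdef
      have hφι : ∀ m : M, φ (ι A m) = TrivSqZeroExt.inr (b.coord (t+1) m) := by
        intro m
        rw [hφdef, lift_ι_apply]
        rfl
      have hφb : ∀ s : ℕ, s ≠ t + 1 → φ (ι A (b s)) = 0 := by
        intro s hs
        rw [hφι, Module.Basis.coord_apply, Module.Basis.repr_self]
        simp [Finsupp.single_apply, hs]
      have hφJ : ∀ x ∈ J (t+1), φ x = 0 := by
        intro x hx
        rw [hJ] at hx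
        refine kill_span φ.toRingHom ?_ x hx
        rintro _ ⟨_, ⟨s, hs, rfl⟩, rfl⟩
        exact hφb s (by simp at hs; omega)
      set j : ExteriorAlgebra A M := D (ι A (b k)) - ι A (b t) * ι A (b (t + 1))
        - algebraMap A (ExteriorAlgebra A M) Q with hjdef
      -- D j ∈ J (t+1)
      have hDj : D j ∈ J (t+1) :=
        hstab t (t+1) (Nat.le_succ t) (fun s hs => Jmono (by omega) (hDs s hs)) _ hq
      have e2 : D (ι A (b k)) = j + ι A (b t) * ι A (b (t + 1))
          + algebraMap A (ExteriorAlgebra A M) Q := by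
        rw [hjdef]; abel
      have e3 : D (D (ι A (b k))) = 0 := hD2 _
      rw [e2, map_add, map_add, hDalg, add_zero, hLeib] at e3
      have e6 := congrArg φ e3
      rw [map_add, hφJ _ hDj, zero_add, map_sub, map_mul, map_mul, hφb t (by omega),
        zero_mul, sub_zero, map_zero] at e6
      -- φ (D (ι (b t))) = inl P
      have e4 : φ (D (ι A (b t))) = TrivSqZeroExt.inl P := by
        have h0 := hφJ _ (Jmono (Nat.le_succ t) hPm)
        rw [map_sub, sub_eq_zero] at h0
        rw [h0, AlgHom.commutes, TrivSqZeroExt.algebraMap_eq_inl']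
        simp
      have e5 : φ (ι A (b (t+1))) = TrivSqZeroExt.inr (1 : A) := by
        rw [hφι, Module.Basis.coord_apply, Module.Basis.repr_self]
        simp
      rw [e4, e5, TrivSqZeroExt.inl_mul_inr, smul_eq_mul, mul_one] at e6
      exact TrivSqZeroExt.inr_injective (M := A) (R := A)
        (e6.trans (by simp))
  -- π ∘ D ∘ ι = 0 on all of M
  have hw : ∀ w : M, π (D (ι A w)) = 0 := by
    have hzero : (π.toLinearMap ∘ₗ D ∘ₗ (ι A : M →ₗ[A] ExteriorAlgebra A M))
        = (0 : M →ₗ[A] A) := by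
      refine b.ext fun t => ?_
      simpa using hP t
    intro w
    simpa using LinearMap.congr_fun hzero w
  -- the main multiplicative identity
  have key : ∀ u v : ExteriorAlgebra A M, π (D (u * v)) = π u * π (D v) := by
    intro u
    induction u using ExteriorAlgebra.induction with
    | algebraMap r =>
      intro v
      rw [← Algebra.smul_def, map_smul, map_smul, hπalg, smul_eq_mul]
    | ι w =>
      intro v
      rw [hLeib, map_sub, map_mul, map_mul, hw, hπι, zero_mul, zero_mul, sub_zero]
    | mul u₁ u₂ h₁ h₂ =>
      intro v
      rw [mul_assoc, h₁, h₂, map_mul, mul_assoc]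
    | add u₁ u₂ h₁ h₂ =>
      intro v
      simp only [add_mul, map_add, h₁, h₂]
  refine ⟨fun x => ?_, fun a => hπalg a⟩
  have := key x 1
  rw [mul_one, hD1, map_zero, mul_zero] at this
  exact this
end

section
/- Fix integers 0 < m < n and rational numbers a₀, …, a_{m−1}. Let R = MvPolynomial (Fin 2) ℚ with generators x and u, let T be the exterior algebra Λ_R(Fin 2 → R) of the free rank-2 R-module, with y and v the images under ι of the two standard basis vectors, and set P = u^{m+1} + Σ_{i=0}^{m−1} aᵢ uⁱ x^{m+1−i} ∈ R. Let D : T → T be the unique R-linear map with D(1) = 0, D(y) = algebraMap(x^{n+1}), D(v) = algebraMap(P), and D(y * v) = algebraMap(x^{n+1}) * v − algebraMap(P) * y. Let Q = Polynomial ℚ with generator x′, let B be the exterior algebra Λ_Q(Q) of the free rank-1 Q-module, with y′ = ι(1), and let d : B → B be the unique Q-linear map with d(1) = 0 and d(y′) = algebraMap(x′^{n+1}). Then the following are equivalent: (a) there exist q ∈ ℚ and a ℚ-algebra homomorphism S : T → B with S(algebraMap x) = algebraMap x′, S(algebraMap u) = q • algebraMap x′, S(y) = y′, S(v) = 0, and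 S ∘ D = d ∘ S; (b) the polynomial z^{m+1} + a_{m−1} z^{m−1} + ⋯ + a₁ z + a₀ has a root in ℚ. -/
open ExteriorAlgebra

/-- The base ring `R = ℚ[x, u]` of the relative Sullivan model of a fibration
`ℂP^m → E → ℂP^n`. -/
abbrev ModelR : Type := MvPolynomial (Fin 2) ℚ

/-- The relative Sullivan model `T = Λ_R(R y ⊕ R v)` of a fibration `ℂP^m → E → ℂP^n`. -/
abbrev ModelT : Type := ExteriorAlgebra ModelR (Fin 2 → ModelR)

/-- The base ring `Q = ℚ[x′]` of the Sullivan minimal model of `ℂP^n`. -/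
abbrev ModelQ : Type := Polynomial ℚ

/-- The Sullivan minimal model `B = Λ_Q(Q y′)` of `ℂP^n`. -/
abbrev ModelB : Type := ExteriorAlgebra ModelQ ModelQ

/-!
A retraction `S` is determined on the base ring `ℚ[x, u]` by `x ↦ x'`, `u ↦ q x'`, i.e. it
restricts polynomials to the line `u = q x`. Since `P` is homogeneous of degree `m + 1`, this sends
`P` to `p(q) x'^(m+1)`, where `p` is the displayed polynomial, and `S P = S (D v) = d (S v) = 0`
forces `p(q) = 0`.

Conversely, for a root `z` of `p`, restriction to the line `u = z x` together with `y ↦ y'`,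
`v ↦ 0` induces a map `S` of exterior algebras. Both `S ∘ D` and `d ∘ S` are semilinear over the
restriction, so it suffices to compare them on the basis `1, y, v, y v`, where `S P = 0` is exactly
what is needed.
-/

namespace ExteriorAlgebra

section mapₛₗ

variable {R A M N : Type*} [CommRing R] [CommRing A] [AddCommGroup M] [Module R M]
  [AddCommGroup N] [Module A N] {φ : R →+* A}

noncomputable def mapₛₗ (f : M →ₛₗ[φ] N) : ExteriorAlgebra R M →+* ExteriorAlgebra A N :=
  -- `lift` needs an `R`-algebra structure on the target: restrict scalars along `φ`.
  letI := Algebra.compHom (ExteriorAlgebra A N) φ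
  let g : M →ₗ[R] ExteriorAlgebra A N :=
    { toFun := fun m => ι A (f m)
      map_add' := fun m m' => by simp only [map_add]
      map_smul' := fun r m => by
        rw [f.map_smulₛₗ, map_smul, RingHom.id_apply]
        rfl }
  (lift R ⟨g, fun m => ι_sq_zero (f m)⟩).toRingHom

theorem mapₛₗ_algebraMap (f : M →ₛₗ[φ] N) (r : R) :
    mapₛₗ f (algebraMap R _ r) = algebraMap A _ (φ r) :=
  letI := Algebra.compHom (ExteriorAlgebra A N) φ
  AlgHom.commutes _ r

theorem mapₛₗ_ι (f : M →ₛₗ[φ] N) (m : M) : mapₛₗ f (ι R m) = ι A (f m) :=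
  letI := Algebra.compHom (ExteriorAlgebra A N) φ
  lift_ι_apply R _ _ m

theorem mapₛₗ_comp_apply_of_eqOn_span (f : M →ₛₗ[φ] N)
    {D : ExteriorAlgebra R M →ₗ[R] ExteriorAlgebra R M}
    {d : ExteriorAlgebra A N →ₗ[A] ExteriorAlgebra A N} {s : Set (ExteriorAlgebra R M)}
    (hs : Submodule.span R s = ⊤) (h : ∀ t ∈ s, mapₛₗ f (D t) = d (mapₛₗ f t))
    (t : ExteriorAlgebra R M) : mapₛₗ f (D t) = d (mapₛₗ f t) := by
  let F : ExteriorAlgebra R M →ₛₗ[φ] ExteriorAlgebra A N :=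
    { toFun := mapₛₗ f
      map_add' := map_add _
      map_smul' := fun r t => by
        rw [Algebra.smul_def, map_mul, mapₛₗ_algebraMap, ← Algebra.smul_def] }
  exact LinearMap.congr_fun (LinearMap.ext_on (f := F ∘ₛₗ D) (g := d ∘ₛₗ F) hs h) t

end mapₛₗ

theorem span_one_ι_single_ι_single_mul_eq_top (R : Type*) [CommRing R] :
    Submodule.span R {1, ι R (Pi.single 0 1 : Fin 2 → R), ι R (Pi.single 1 1 : Fin 2 → R),
      ι R (Pi.single 0 1 : Fin 2 → R) * ι R (Pi.single 1 1)} = ⊤ := by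
  set e₀ := ι R (Pi.single 0 1 : Fin 2 → R)
  set e₁ := ι R (Pi.single 1 1 : Fin 2 → R)
  set p := Submodule.span R {1, e₀, e₁, e₀ * e₁}
  have h₀₀ : e₀ * e₀ = 0 := ι_sq_zero _
  have h₁₁ : e₁ * e₁ = 0 := ι_sq_zero _
  have h₁₀ : e₁ * e₀ = -(e₀ * e₁) := eq_neg_of_add_eq_zero_right (ι_add_mul_swap _ _)
  have h₁ : (1 : ExteriorAlgebra R (Fin 2 → R)) ∈ p := Submodule.subset_span (by simp)
  have he₀ : e₀ ∈ p := Submodule.subset_span (by simp)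
  have he₁ : e₁ ∈ p := Submodule.subset_span (by simp)
  have he₀₁ : e₀ * e₁ ∈ p := Submodule.subset_span (by simp)
  have hmul : p * p ≤ p := by
    rw [Submodule.span_mul_span, Submodule.span_le, Set.mul_subset_iff]
    intro a ha b hb
    simp only [Set.mem_insert_iff, Set.mem_singleton_iff] at ha hb
    rcases ha with rfl | rfl | rfl | rfl <;> rcases hb with rfl | rfl | rfl | rfl <;>
      (try simp only [one_mul, mul_one, h₀₀, h₁₁, h₁₀, mul_assoc, ← mul_assoc e₁ e₀,
        ← mul_assoc e₀ e₀, zero_mul, mul_zero, neg_mul, mul_neg, neg_zero, SetLike.mem_coe,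
        neg_mem_iff]) <;>
      first | assumption | exact p.zero_mem
  rw [Submodule.eq_top_iff']
  intro t
  induction t using ExteriorAlgebra.induction with
  | algebraMap r => simpa only [Algebra.algebraMap_eq_smul_one] using p.smul_mem r h₁
  | ι w =>
    have hw : w = w 0 • Pi.single 0 1 + w 1 • Pi.single 1 1 := by
      funext i; fin_cases i <;> simp
    rw [hw, map_add, map_smul, map_smul]
    exact p.add_mem (p.smul_mem _ he₀) (p.smul_mem _ he₁)
  | mul a b ha hb => exact hmul (Submodule.mul_mem_mul ha hb)
  | add a b ha hb => exact p.add_mem ha hb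

end ExteriorAlgebra

namespace MvPolynomial

variable {K : Type*} [CommRing K]

noncomputable def restrictToLine (z : K) : MvPolynomial (Fin 2) K →ₐ[K] Polynomial K :=
  aeval ![Polynomial.X, z • Polynomial.X]

@[simp]
theorem restrictToLine_X_zero (z : K) : restrictToLine z (X 0) = Polynomial.X := by
  simp [restrictToLine]

@[simp]
theorem restrictToLine_X_one (z : K) : restrictToLine z (X 1) = z • Polynomial.X := by
  simp [restrictToLine]

theorem restrictToLine_X_one_pow_add_sum {m : ℕ} (a : Fin m → K) (z : K) :
    restrictToLine z (X 1 ^ (m + 1) + ∑ i : Fin m, C (a i) * X 1 ^ (i : ℕ) * X 0 ^ (m + 1 - i))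
      = Polynomial.C (z ^ (m + 1) + ∑ i : Fin m, a i * z ^ (i : ℕ)) * Polynomial.X ^ (m + 1) := by
  have hX : ∀ i : Fin m, (Polynomial.X : Polynomial K) ^ (i : ℕ) * Polynomial.X ^ (m + 1 - i)
      = Polynomial.X ^ (m + 1) := fun i => by rw [← pow_add]; congr 1; omega
  simp only [map_add, map_sum, map_mul, map_pow, restrictToLine_X_zero, restrictToLine_X_one,
    algHom_C, Polynomial.algebraMap_eq, Polynomial.smul_eq_C_mul, add_mul, Finset.sum_mul]
  congr 1
  · ring
  · refine Finset.sum_congr rfl fun i _ => ?_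
    rw [← hX i]
    ring

theorem _root_.AlgHom.apply_algebraMap_eq_restrictToLine {T B : Type*} [Semiring T] [Semiring B]
    [Algebra K T] [Algebra (MvPolynomial (Fin 2) K) T] [IsScalarTower K (MvPolynomial (Fin 2) K) T]
    [Algebra K B] [Algebra (Polynomial K) B] [IsScalarTower K (Polynomial K) B]
    (S : T →ₐ[K] B) {q : K}
    (hx : S (algebraMap (MvPolynomial (Fin 2) K) T (X 0))
      = algebraMap (Polynomial K) B Polynomial.X)
    (hu : S (algebraMap (MvPolynomial (Fin 2) K) T (X 1))
      = q • algebraMap (Polynomial K) B Polynomial.X)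
    (r : MvPolynomial (Fin 2) K) :
    S (algebraMap (MvPolynomial (Fin 2) K) T r)
      = algebraMap (Polynomial K) B (restrictToLine q r) := by
  have h : S.comp (IsScalarTower.toAlgHom K (MvPolynomial (Fin 2) K) T)
      = (IsScalarTower.toAlgHom K (Polynomial K) B).comp (restrictToLine q) := by
    refine algHom_ext fun i => ?_
    fin_cases i
    · simpa using hx
    · change S (algebraMap _ T (X 1))
        = IsScalarTower.toAlgHom K (Polynomial K) B (restrictToLine q (X 1))
      rw [hu, restrictToLine_X_one, map_smul]
      rfl
  exact DFunLike.congr_fun h r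

end MvPolynomial

open MvPolynomial

theorem stmt5_general (m n : ℕ) (a : Fin m → ℚ)
    (x u : ModelR) (hx : x = MvPolynomial.X 0) (hu : u = MvPolynomial.X 1)
    (y v : ModelT)
    (hy : y = ι ModelR (Pi.single (0 : Fin 2) (1 : ModelR)))
    (hv : v = ι ModelR (Pi.single (1 : Fin 2) (1 : ModelR)))
    (P : ModelR)
    (hP : P = u ^ (m + 1) +
      ∑ i : Fin m, MvPolynomial.C (a i) * u ^ (i : ℕ) * x ^ (m + 1 - (i : ℕ)))
    (D : ModelT →ₗ[ModelR] ModelT)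
    (hD1 : D 1 = 0)
    (hDy : D y = algebraMap ModelR ModelT (x ^ (n + 1)))
    (hDv : D v = algebraMap ModelR ModelT P)
    (hDyv : D (y * v) =
      algebraMap ModelR ModelT (x ^ (n + 1)) * v - algebraMap ModelR ModelT P * y)
    (x' : ModelQ) (hx' : x' = Polynomial.X)
    (y' : ModelB) (hy' : y' = ι ModelQ (1 : ModelQ))
    (d : ModelB →ₗ[ModelQ] ModelB)
    (hd1 : d 1 = 0)
    (hdy' : d y' = algebraMap ModelQ ModelB (x' ^ (n + 1))) :
    (∃ (q : ℚ) (S : ModelT →ₐ[ℚ] ModelB),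
        S (algebraMap ModelR ModelT x) = algebraMap ModelQ ModelB x' ∧
        S (algebraMap ModelR ModelT u) = q • algebraMap ModelQ ModelB x' ∧
        S y = y' ∧ S v = 0 ∧ ∀ t : ModelT, S (D t) = d (S t)) ↔
      (∃ z : ℚ, z ^ (m + 1) + ∑ i : Fin m, a i * z ^ (i : ℕ) = 0) := by
  subst hx hu hx' hy'
  constructor
  · rintro ⟨q, S, hSx, hSu, -, hSv, hSD⟩
    have hPq := S.apply_algebraMap_eq_restrictToLine hSx hSu P
    rw [← hDv, hSD, hSv, map_zero, hP, restrictToLine_X_one_pow_add_sum, eq_comm,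
      algebraMap_eq_zero_iff, Polynomial.C_mul_X_pow_eq_monomial,
      Polynomial.monomial_eq_zero_iff] at hPq
    exact ⟨q, hPq⟩
  · rintro ⟨z, hz⟩
    let f : (Fin 2 → ModelR) →ₛₗ[(restrictToLine z : ModelR →+* ModelQ)] ModelQ :=
      (restrictToLine z : ModelR →+* ModelQ).toSemilinearMap ∘ₛₗ LinearMap.proj 0
    have hPz : restrictToLine z P = 0 := by
      rw [hP, restrictToLine_X_one_pow_add_sum, hz, map_zero, zero_mul]
    have hSy : mapₛₗ f y = ι ModelQ 1 := by simp [hy, mapₛₗ_ι, f]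
    have hSv : mapₛₗ f v = 0 := by simp [hv, mapₛₗ_ι, f]
    refine ⟨z, (mapₛₗ f).toRatAlgHom, ?_, ?_, hSy, hSv, ?_⟩
    · simp [mapₛₗ_algebraMap]
    · simp [mapₛₗ_algebraMap, map_rat_smul]
    · refine mapₛₗ_comp_apply_of_eqOn_span f (span_one_ι_single_ι_single_mul_eq_top ModelR) ?_
      rw [← hy, ← hv]
      simp only [Set.mem_insert_iff, Set.mem_singleton_iff, forall_eq_or_imp, forall_eq]
      refine ⟨?_, ?_, ?_, ?_⟩
      · rw [hD1, map_zero, map_one, hd1]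
      · rw [hDy, mapₛₗ_algebraMap, RingHom.coe_coe, hSy, hdy', map_pow, restrictToLine_X_zero]
      · rw [hDv, mapₛₗ_algebraMap, RingHom.coe_coe, hSv, hPz, map_zero, map_zero]
      · rw [hDyv, map_sub, map_mul, map_mul, map_mul, mapₛₗ_algebraMap, mapₛₗ_algebraMap,
          RingHom.coe_coe, hPz, hSv, map_zero, zero_mul, mul_zero, sub_zero, mul_zero, map_zero]

/-- The Example of the paper: the relative Sullivan model of the fibration
`ℂP^m → E → ℂP^n` classified by `(a_{m-1}, …, a₀) ∈ ℚ^m` admits a DG algebra retraction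
onto the model of the base if and only if the polynomial
`z^{m+1} + a_{m-1} z^{m-1} + ⋯ + a₁ z + a₀` has a rational root. -/
theorem stmt5 (m n : ℕ) (hm : 0 < m) (hmn : m < n) (a : Fin m → ℚ)
    (x u : ModelR) (hx : x = MvPolynomial.X 0) (hu : u = MvPolynomial.X 1)
    (y v : ModelT)
    (hy : y = ι ModelR (Pi.single (0 : Fin 2) (1 : ModelR)))
    (hv : v = ι ModelR (Pi.single (1 : Fin 2) (1 : ModelR)))
    (P : ModelR)
    (hP : P = u ^ (m + 1) +
      ∑ i : Fin m, MvPolynomial.C (a i) * u ^ (i : ℕ) * x ^ (m + 1 - (i : ℕ)))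
    (D : ModelT →ₗ[ModelR] ModelT)
    (hD1 : D 1 = 0)
    (hDy : D y = algebraMap ModelR ModelT (x ^ (n + 1)))
    (hDv : D v = algebraMap ModelR ModelT P)
    (hDyv : D (y * v) =
      algebraMap ModelR ModelT (x ^ (n + 1)) * v - algebraMap ModelR ModelT P * y)
    (x' : ModelQ) (hx' : x' = Polynomial.X)
    (y' : ModelB) (hy' : y' = ι ModelQ (1 : ModelQ))
    (d : ModelB →ₗ[ModelQ] ModelB)
    (hd1 : d 1 = 0)
    (hdy' : d y' = algebraMap ModelQ ModelB (x' ^ (n + 1))) :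
    (∃ (q : ℚ) (S : ModelT →ₐ[ℚ] ModelB),
        S (algebraMap ModelR ModelT x) = algebraMap ModelQ ModelB x' ∧
        S (algebraMap ModelR ModelT u) = q • algebraMap ModelQ ModelB x' ∧
        S y = y' ∧ S v = 0 ∧ ∀ t : ModelT, S (D t) = d (S t)) ↔
      (∃ z : ℚ, z ^ (m + 1) + ∑ i : Fin m, a i * z ^ (i : ℕ) = 0) :=
  stmt5_general m n a x u hx hu y v hy hv P hP D hD1 hDy hDv hDyv x' hx' y' hy' d hd1 hdy'
end
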